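/- For d ≥ 2, the value of the (d-2)-nd iterated backward difference of χ̃ at x = d satisfies (D^{d-2}χ̃)(d)/(d-2)! = μ^{d-2}·[ (1/24)(d-1)d(d+1)(3d+10)μ² - (1/4)p(d-1)d(d+2)μ + (1/2)c̃₂ ], where c̃₂ = d²p²/4 - r(p-1)p(2p-1)/6 + r(r-1)a(3p²-3p+1)/12 - (r-1)r(2r-1)a²(p-1)/24 + r²(r-1)²a³/48. -/

import Mathlib

/-- Backward difference operator: `(D f)(x) = f x - f (x-1)`. -/
noncomputable def bdiff (f : ℝ → ℝ) : ℝ → ℝ := fun x => f x - f (x - 1)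

/-- `d = r(r-1)a/2 + rb + r`. -/
def dInv (r a b : ℕ) : ℕ := r * (r - 1) * a / 2 + r * b + r

/-- `p = (r-1)a + b + 2`. -/
def pInv (r a b : ℕ) : ℕ := (r - 1) * a + b + 2

/-- The function `χ̃(x) = ∏_{j=1}^r (μx - p + 1 + (j-1)a/2)_{1+b+(r-j)a}`. -/
noncomputable def chiF (r a b : ℕ) (μ : ℝ) : ℝ → ℝ := fun x =>
  ∏ j ∈ Finset.Icc 1 r,
    (ascPochhammer ℝ (1 + b + (r - j) * a)).eval
      (μ * x - (pInv r a b : ℝ) + 1 + ((j : ℝ) - 1) * a / 2)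

/-- `c̃₂` as a real number. -/
noncomputable def ctildeR (r a b : ℕ) : ℝ :=
  (dInv r a b : ℝ) ^ 2 * (pInv r a b : ℝ) ^ 2 / 4
    - (r : ℝ) * ((pInv r a b : ℝ) - 1) * (pInv r a b : ℝ) * (2 * (pInv r a b : ℝ) - 1) / 6
    + (r : ℝ) * ((r : ℝ) - 1) * (a : ℝ) *
        (3 * (pInv r a b : ℝ) ^ 2 - 3 * (pInv r a b : ℝ) + 1) / 12
    - ((r : ℝ) - 1) * (r : ℝ) * (2 * (r : ℝ) - 1) * (a : ℝ) ^ 2 * ((pInv r a b : ℝ) - 1) / 24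
    + (r : ℝ) ^ 2 * ((r : ℝ) - 1) ^ 2 * (a : ℝ) ^ 3 / 48

/-!
Write `χ̃(x) = P(μx)` with `P = ∏ (X - ρ)` monic of degree `d`. One backward step in `x` is the
operator `Δ Q = Q - Q(X - μ) = (1 - e^{-μ∂}) Q` on `P`, and on polynomials of degree `≤ k + 2`
only three terms of the expansion of `Δ^k` in powers of `∂` survive. With `k = d - 2` they involve
the derivatives `P^{(d-2)}, P^{(d-1)}, P^{(d)}`, which depend only on `d`, `∑ ρ` and `∑ ρ²`.
The roots come in `r` arithmetic progressions of step one, each symmetric about `p / 2`, so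
`∑ ρ = dp/2` and `∑ ρ² = dp²/4 + ∑ (n³ - n)/12` over the block lengths `n`.
-/

open Polynomial Finset
open scoped Nat

section BackwardDifference

variable {R : Type*} [CommRing R]

noncomputable def bdiffPoly (μ : R) (Q : R[X]) : R[X] := Q - Q.comp (X - C μ)

lemma natDegree_bdiffPoly_le {μ : R} {Q : R[X]} {m : ℕ} (hQ : Q.natDegree ≤ m + 1) :
    (bdiffPoly μ Q).natDegree ≤ m := by
  rcases eq_or_ne (bdiffPoly μ Q) 0 with h | h
  · simp [h]
  have hQ0 : Q ≠ 0 := by rintro rfl; simp [bdiffPoly] at h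
  have hshift : Q.comp (X - C μ) = taylor (-μ) Q := by
    rw [taylor_apply, map_neg, sub_eq_add_neg]
  have hlt : (bdiffPoly μ Q).degree < Q.degree := by
    rw [bdiffPoly, hshift]
    exact degree_sub_lt_left (degree_taylor Q _).symm hQ0 (leadingCoeff_taylor ..).symm
  have := natDegree_lt_natDegree h hlt
  omega

lemma iterate_derivative_bdiffPoly (μ : R) (Q : R[X]) (j : ℕ) :
    derivative^[j] (bdiffPoly μ Q) = bdiffPoly μ (derivative^[j] Q) := by
  induction j with
  | zero => rfl
  | succ j ih =>
    rw [Function.iterate_succ_apply', ih, Function.iterate_succ_apply', bdiffPoly, bdiffPoly,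
      derivative_sub, derivative_comp]
    simp

lemma bdiff_iterate_eval_mul (μ : ℝ) (Q : ℝ[X]) (k : ℕ) (x : ℝ) :
    bdiff^[k] (fun y => Q.eval (μ * y)) x = ((bdiffPoly μ)^[k] Q).eval (μ * x) := by
  induction k generalizing Q with
  | zero => rfl
  | succ k ih =>
    have hstep : bdiff (fun y => Q.eval (μ * y)) = fun y => (bdiffPoly μ Q).eval (μ * y) := by
      funext y
      simp only [bdiff, bdiffPoly, eval_sub, eval_comp, eval_X, eval_C]
      ring_nf
    rw [Function.iterate_succ_apply, Function.iterate_succ_apply, hstep, ih]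

end BackwardDifference

section TaylorShift

variable {K : Type*} [Field K] [CharZero K]

lemma bdiffPoly_of_natDegree_le_three {μ : K} {R : K[X]} (hR : R.natDegree ≤ 3) :
    bdiffPoly μ R = C μ * derivative R - C (μ ^ 2 / 2) * derivative^[2] R
      + C (μ ^ 3 / 6) * derivative^[3] R := by
  obtain ⟨c₀, c₁, c₂, c₃, rfl⟩ : ∃ c₀ c₁ c₂ c₃ : K,
      R = C c₀ + C c₁ * X + C c₂ * X ^ 2 + C c₃ * X ^ 3 := by
    refine ⟨R.coeff 0, R.coeff 1, R.coeff 2, R.coeff 3, (R.as_sum_range' 4 (by omega)).trans ?_⟩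
    simp [sum_range_succ, ← C_mul_X_pow_eq_monomial]
  apply Polynomial.funext
  intro x
  simp [bdiffPoly, Function.iterate_succ_apply']
  ring

/-- `Δ = 1 - e^{-μ∂} = μ∂ (1 - μ∂/2 + μ²∂²/6 - …)`, so on polynomials of degree `≤ k + 2` only the
first three terms of `Δ^k = (μ∂)^k (1 - kμ∂/2 + k(3k+1)μ²∂²/24 - …)` survive. -/
lemma iterate_bdiffPoly_of_natDegree_le (μ : K) (k : ℕ) {Q : K[X]} (hQ : Q.natDegree ≤ k + 2) :
    (bdiffPoly μ)^[k] Q = C (μ ^ k) * (derivative^[k] Q - C (k * μ / 2) * derivative^[k + 1] Q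
      + C (k * (3 * k + 1) * μ ^ 2 / 24) * derivative^[k + 2] Q) := by
  induction k generalizing Q with
  | zero => simp
  | succ k ih =>
    have hdeg (j : ℕ) : (derivative^[j] Q).natDegree ≤ k + 3 - j :=
      (natDegree_iterate_derivative Q _).trans (by omega)
    have hvanish (j : ℕ) (hj : k + 4 ≤ j) : derivative^[j] Q = 0 :=
      iterate_derivative_eq_zero (by omega)
    rw [Function.iterate_succ_apply, ih (natDegree_bdiffPoly_le (by omega)),
      iterate_derivative_bdiffPoly, iterate_derivative_bdiffPoly, iterate_derivative_bdiffPoly,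
      bdiffPoly_of_natDegree_le_three ((hdeg k).trans (by omega)),
      bdiffPoly_of_natDegree_le_three ((hdeg (k + 1)).trans (by omega)),
      bdiffPoly_of_natDegree_le_three ((hdeg (k + 2)).trans (by omega))]
    simp only [← Function.iterate_succ_apply' derivative, ← Function.iterate_add_apply]
    simp (disch := omega) only [Nat.succ_eq_add_one, add_comm _ k, add_left_comm _ k, add_assoc,
      Nat.reduceAdd, hvanish]
    apply Polynomial.funext
    intro x
    simp only [eval_mul, eval_add, eval_sub, eval_C, eval_zero]
    push_cast
    ring

end TaylorShift

section ProdXSubC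

variable {R ι : Type*} [CommRing R]

lemma iterate_derivative_X_sub_C_mul (c : R) (k : ℕ) (v : R[X]) :
    derivative^[k + 1] ((X - C c) * v) =
      (X - C c) * derivative^[k + 1] v + ((k : R[X]) + 1) * derivative^[k] v := by
  rw [sub_mul, iterate_derivative_sub, mul_comm X, iterate_derivative_mul_X,
    iterate_derivative_C_mul, nsmul_eq_mul, Nat.add_sub_cancel]
  push_cast
  ring

variable (f : ι → R)

lemma natDegree_prod_X_sub_C_le (s : Finset ι) : (∏ m ∈ s, (X - C (f m))).natDegree ≤ #s :=
  (natDegree_prod_le _ _).trans ((sum_le_sum fun _ _ => natDegree_X_sub_C_le _).trans (by simp))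

variable [DecidableEq ι]

lemma iterate_derivative_prod_X_sub_C_card (s : Finset ι) :
    derivative^[#s] (∏ m ∈ s, (X - C (f m))) = ((#s)! : R[X]) := by
  induction s using Finset.induction with
  | empty => simp
  | insert a s ha ih =>
    rw [prod_insert ha, card_insert_of_notMem ha, iterate_derivative_X_sub_C_mul,
      iterate_derivative_eq_zero (Nat.lt_succ_of_le (natDegree_prod_X_sub_C_le f s)), ih,
      mul_zero, zero_add, Nat.factorial_succ]
    push_cast
    ring

lemma iterate_derivative_prod_X_sub_C_of_card_eq_succ {k : ℕ} {s : Finset ι}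
    (hs : #s = k + 1) :
    derivative^[k] (∏ m ∈ s, (X - C (f m))) = (k ! : R[X]) * ∑ m ∈ s, (X - C (f m)) := by
  induction s using Finset.induction generalizing k with
  | empty => simp at hs
  | insert a s ha ih =>
    rw [card_insert_of_notMem ha] at hs
    rw [prod_insert ha, sum_insert ha]
    rcases k with _ | k
    · simp [card_eq_zero.mp (by omega : #s = 0)]
    · have htop := iterate_derivative_prod_X_sub_C_card f s
      rw [show #s = k + 1 by omega] at htop
      rw [iterate_derivative_X_sub_C_mul, htop, ih (by omega), Nat.factorial_succ]
      push_cast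
      ring

lemma iterate_derivative_prod_X_sub_C_of_card_eq_add_two {k : ℕ} {s : Finset ι}
    (hs : #s = k + 2) :
    2 * derivative^[k] (∏ m ∈ s, (X - C (f m))) =
      (k ! : R[X]) * ((∑ m ∈ s, (X - C (f m))) ^ 2 - ∑ m ∈ s, (X - C (f m)) ^ 2) := by
  induction s using Finset.induction generalizing k with
  | empty => simp at hs
  | insert a s ha ih =>
    rw [card_insert_of_notMem ha] at hs
    rw [prod_insert ha, sum_insert ha, sum_insert ha]
    rcases k with _ | k
    · obtain ⟨c, rfl⟩ := card_eq_one.mp (by omega : #s = 1)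
      simp
      ring
    · rw [iterate_derivative_X_sub_C_mul, iterate_derivative_prod_X_sub_C_of_card_eq_succ f
        (by omega), mul_add, mul_left_comm (2 : R[X]) (_ + 1), ih (by omega), Nat.factorial_succ]
      push_cast
      ring

end ProdXSubC

lemma eval_iterate_bdiffPoly_prod_X_sub_C {K ι : Type*} [Field K] [CharZero K] [DecidableEq ι]
    (μ y : K) (f : ι → K) {k : ℕ} {s : Finset ι} (hs : #s = k + 2) :
    ((bdiffPoly μ)^[k] (∏ m ∈ s, (X - C (f m)))).eval y =
      k ! * μ ^ k * ((((k + 2) * y - ∑ m ∈ s, f m) ^ 2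
          - ((k + 2) * y ^ 2 - 2 * y * ∑ m ∈ s, f m + ∑ m ∈ s, f m ^ 2)) / 2
        - k * (k + 1) * μ / 2 * ((k + 2) * y - ∑ m ∈ s, f m)
        + k * (k + 1) * (k + 2) * (3 * k + 1) * μ ^ 2 / 24) := by
  have htop := iterate_derivative_prod_X_sub_C_card f s
  rw [hs] at htop
  have hsecond := congrArg (eval y) (iterate_derivative_prod_X_sub_C_of_card_eq_add_two f hs)
  have hsum : ∑ m ∈ s, (y - f m) = (k + 2) * y - ∑ m ∈ s, f m := by
    rw [sum_sub_distrib, sum_const, hs, nsmul_eq_mul]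
    push_cast
    ring
  have hsum_sq : ∑ m ∈ s, (y - f m) ^ 2 = (k + 2) * y ^ 2 - 2 * y * ∑ m ∈ s, f m
      + ∑ m ∈ s, f m ^ 2 := by
    simp only [sub_sq, sum_add_distrib, sum_sub_distrib, sum_const, hs, nsmul_eq_mul, ← mul_sum]
    push_cast
    ring
  rw [iterate_bdiffPoly_of_natDegree_le μ k ((natDegree_prod_X_sub_C_le f s).trans hs.le), htop,
    iterate_derivative_prod_X_sub_C_of_card_eq_succ f (k := k + 1) (by omega)]
  simp only [eval_mul, eval_add, eval_sub, eval_pow, eval_C, eval_X, eval_finsetSum, eval_natCast,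
    eval_ofNat] at hsecond ⊢
  rw [hsum, hsum_sq] at hsecond
  rw [hsum]
  push_cast [Nat.factorial_succ]
  linear_combination (μ ^ k / 2) * hsecond

section PowerSums

variable {K : Type*} [Field K] [CharZero K]

lemma sum_range_sub_natCast (x : K) (n : ℕ) :
    ∑ i ∈ range n, (x - i) = n * x - n * (n - 1) / 2 := by
  induction n with
  | zero => simp
  | succ n ih => rw [sum_range_succ, ih]; push_cast; ring

lemma sum_range_sub_natCast_sq (x : K) (n : ℕ) :
    ∑ i ∈ range n, (x - i) ^ 2 = n * x ^ 2 - x * n * (n - 1) + n * (n - 1) * (2 * n - 1) / 6 := by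
  induction n with
  | zero => simp
  | succ n ih => rw [sum_range_succ, ih]; push_cast; ring

lemma sum_range_add_natCast_mul (u c : K) (n : ℕ) :
    ∑ i ∈ range n, (u + i * c) = n * u + n * (n - 1) / 2 * c := by
  induction n with
  | zero => simp
  | succ n ih => rw [sum_range_succ, ih]; push_cast; ring

lemma sum_range_add_natCast_mul_cube (u c : K) (n : ℕ) :
    ∑ i ∈ range n, (u + i * c) ^ 3 = n * u ^ 3 + 3 * u ^ 2 * c * (n * (n - 1) / 2)
      + 3 * u * c ^ 2 * ((n - 1) * n * (2 * n - 1) / 6) + c ^ 3 * (n ^ 2 * (n - 1) ^ 2 / 4) := by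
  induction n with
  | zero => simp
  | succ n ih => rw [sum_range_succ, ih]; push_cast; ring

end PowerSums

lemma sum_Icc_one_tsub {M : Type*} [AddCommMonoid M] (g : ℕ → M) (r : ℕ) :
    ∑ j ∈ Icc 1 r, g (r - j) = ∑ i ∈ range r, g i := by
  rw [← Ico_add_one_right_eq_Icc, sum_Ico_reflect g 1 le_rfl, Nat.sub_self, Nat.add_sub_cancel,
    Nat.Ico_zero_eq_range]

lemma ascPochhammer_eval_eq_prod_range {R : Type*} [CommSemiring R] (n : ℕ) (y : R) :
    (ascPochhammer R n).eval y = ∏ i ∈ range n, (y + i) := by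
  induction n with
  | zero => simp
  | succ n ih => rw [ascPochhammer_succ_eval, ih, prod_range_succ]

section ChiRoots

variable (r a b : ℕ)

def chiBlockLen (j : ℕ) : ℕ := 1 + b + (r - j) * a

def chiRootIdx : Finset (Σ _ : ℕ, ℕ) := (Icc 1 r).sigma fun j => range (chiBlockLen r a b j)

noncomputable def chiRoot (m : Σ _ : ℕ, ℕ) : ℝ := pInv r a b - 1 - ((m.1 : ℝ) - 1) * a / 2 - m.2

lemma chiF_eq_eval_prod (μ : ℝ) :
    chiF r a b μ = fun x => (∏ m ∈ chiRootIdx r a b, (X - C (chiRoot r a b m))).eval (μ * x) := by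
  funext x
  rw [eval_prod, chiRootIdx, prod_sigma]
  refine prod_congr rfl fun j _ => ?_
  rw [ascPochhammer_eval_eq_prod_range]
  refine prod_congr rfl fun i _ => ?_
  simp only [chiRoot, eval_sub, eval_X, eval_C]
  ring

variable {r a b}

lemma natCast_pInv (hr : 1 ≤ r) : (pInv r a b : ℝ) = (r - 1) * a + b + 2 := by
  simp [pInv, Nat.cast_sub hr]

lemma natCast_dInv (hr : 1 ≤ r) : (dInv r a b : ℝ) = r * (r - 1) / 2 * a + r * b + r := by
  have hdvd : 2 ∣ r * (r - 1) * a := (Nat.even_mul_pred_self r).two_dvd.mul_right a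
  rw [dInv, Nat.cast_add, Nat.cast_add, Nat.cast_div hdvd two_ne_zero]
  push_cast [Nat.cast_sub hr]
  ring

lemma sum_chiBlockLen (hr : 1 ≤ r) : ∑ j ∈ Icc 1 r, (chiBlockLen r a b j : ℝ) = dInv r a b := by
  unfold chiBlockLen
  rw [sum_Icc_one_tsub (fun t => ((1 + b + t * a : ℕ) : ℝ)), natCast_dInv hr]
  push_cast
  rw [sum_range_add_natCast_mul]
  ring

lemma sum_chiBlockLen_cube : ∑ j ∈ Icc 1 r, (chiBlockLen r a b j : ℝ) ^ 3 =
    r * (1 + b) ^ 3 + 3 * (1 + b) ^ 2 * a * (r * (r - 1) / 2)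
      + 3 * (1 + b) * a ^ 2 * ((r - 1) * r * (2 * r - 1) / 6)
      + a ^ 3 * (r ^ 2 * (r - 1) ^ 2 / 4) := by
  unfold chiBlockLen
  rw [sum_Icc_one_tsub (fun t => ((1 + b + t * a : ℕ) : ℝ) ^ 3)]
  push_cast
  exact sum_range_add_natCast_mul_cube _ _ r

lemma card_chiRootIdx (hr : 1 ≤ r) : #(chiRootIdx r a b) = dInv r a b := by
  rw [chiRootIdx, card_sigma]
  simp only [card_range]
  exact_mod_cast sum_chiBlockLen hr

/-- Each block of roots is symmetric about `p / 2`. -/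
lemma chiRoot_mk_eq {j : ℕ} (hj : j ∈ Icc 1 r) (i : ℕ) :
    chiRoot r a b ⟨j, i⟩ = pInv r a b / 2 + ((chiBlockLen r a b j : ℝ) - 1) / 2 - i := by
  rw [mem_Icc] at hj
  simp only [chiRoot, chiBlockLen, natCast_pInv (hj.1.trans hj.2)]
  push_cast [Nat.cast_sub hj.2]
  ring

lemma sum_chiRoot (hr : 1 ≤ r) :
    ∑ m ∈ chiRootIdx r a b, chiRoot r a b m = dInv r a b * pInv r a b / 2 := by
  rw [chiRootIdx, sum_sigma, ← sum_chiBlockLen hr, sum_mul, sum_div]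
  refine sum_congr rfl fun j hj => ?_
  simp only [chiRoot_mk_eq hj, sum_range_sub_natCast]
  ring

lemma sum_chiRoot_sq (hr : 1 ≤ r) :
    ∑ m ∈ chiRootIdx r a b, chiRoot r a b m ^ 2 =
      dInv r a b * pInv r a b ^ 2 / 4
        + (∑ j ∈ Icc 1 r, (chiBlockLen r a b j : ℝ) ^ 3 - dInv r a b) / 12 := by
  rw [chiRootIdx, sum_sigma, ← sum_chiBlockLen hr, sum_mul, sum_div, ← sum_sub_distrib, sum_div,
    ← sum_add_distrib]
  refine sum_congr rfl fun j hj => ?_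
  simp only [chiRoot_mk_eq hj, sum_range_sub_natCast_sq]
  ring

end ChiRoots

theorem stmt10_general (r a b : ℕ) (hr : 1 ≤ r) (μ : ℝ) (hd : 2 ≤ dInv r a b) :
    bdiff^[dInv r a b - 2] (chiF r a b μ) (dInv r a b : ℝ) /
        (Nat.factorial (dInv r a b - 2) : ℝ) =
      μ ^ (dInv r a b - 2) *
        (1 / 24 * ((dInv r a b : ℝ) - 1) * (dInv r a b : ℝ) * ((dInv r a b : ℝ) + 1) *
            (3 * (dInv r a b : ℝ) + 10) * μ ^ 2
          - 1 / 4 * (pInv r a b : ℝ) * ((dInv r a b : ℝ) - 1) * (dInv r a b : ℝ) *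
              ((dInv r a b : ℝ) + 2) * μ
          + 1 / 2 * ctildeR r a b) := by
  obtain ⟨k, hk⟩ := Nat.exists_eq_add_of_le' hd
  have hcard : #(chiRootIdx r a b) = k + 2 := (card_chiRootIdx hr).trans hk
  have hk_real : (k : ℝ) = dInv r a b - 2 := by rw [hk]; push_cast; ring
  rw [show dInv r a b - 2 = k by omega, chiF_eq_eval_prod, bdiff_iterate_eval_mul,
    eval_iterate_bdiffPoly_prod_X_sub_C μ _ _ hcard, mul_assoc, mul_div_cancel_left₀ _
      (by positivity), sum_chiRoot hr, sum_chiRoot_sq hr, sum_chiBlockLen_cube, ctildeR,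
    natCast_pInv hr, hk_real, natCast_dInv hr]
  ring

theorem stmt10 (r a b : ℕ) (hr : 1 ≤ r) (μ : ℝ) (hμ : 0 < μ) (hd : 2 ≤ dInv r a b) :
    bdiff^[dInv r a b - 2] (chiF r a b μ) (dInv r a b : ℝ) /
        (Nat.factorial (dInv r a b - 2) : ℝ) =
      μ ^ (dInv r a b - 2) *
        (1 / 24 * ((dInv r a b : ℝ) - 1) * (dInv r a b : ℝ) * ((dInv r a b : ℝ) + 1) *
            (3 * (dInv r a b : ℝ) + 10) * μ ^ 2
          - 1 / 4 * (pInv r a b : ℝ) * ((dInv r a b : ℝ) - 1) * (dInv r a b : ℝ) *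
              ((dInv r a b : ℝ) + 2) * μ
          + 1 / 2 * ctildeR r a b) :=
  stmt10_general r a b hr μ hd
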